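/- With V_eff^1(x) = (1/(2π))∫_{-π}^{π}(x² + 4 sin²(y/2))^{-1/2} dy and Y_1(x) = (x² + 4)^{-1/2}, the difference V_eff^1 − Y_1 is in L^1(R) and ∫_R (V_eff^1(x) − Y_1(x)) dx = ln 4. -/

import Mathlib

open Real MeasureTheory intervalIntegral

/-- The averaged cylinder Coulomb potential at radius 1. -/
noncomputable def Veff1 (x : ℝ) : ℝ :=
  (1 / (2 * π)) * ∫ y in (-π)..π, 1 / Real.sqrt (x ^ 2 + 4 * Real.sin (y / 2) ^ 2)

/-- The regularized comparison potential `Y₁(x) = (x² + 4)^{-1/2}`. -/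
noncomputable def Y1 (x : ℝ) : ℝ := 1 / Real.sqrt (x ^ 2 + 4)

/-!
For `0 < a ≤ b` the function `x ↦ (x² + a²)^{-1/2} - (x² + b²)^{-1/2}` is nonnegative, `O(x⁻²)`, and
has antiderivative `arsinh (x / a) - arsinh (x / b)`, which tends to `± log (b / a)` at `±∞`; so its
integral over `ℝ` is `2 log (b / a)`. With `a = 2 |sin (y / 2)|`, `b = 2` this is
`-2 log |sin (y / 2)|`, integrable in `y`, so Tonelli–Fubini lets us swap the two integrals, and
`∫_{-π}^{π} log |sin (y / 2)| dy = 2 ∫_0^π log (sin u) du = -2π log 2` gives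
`(2π)⁻¹ · 4π log 2 = log 4`.
-/

open Filter Set Topology

lemma integrable_inv_sq_add_sq {b : ℝ} (hb : b ≠ 0) :
    Integrable fun x : ℝ ↦ (x ^ 2 + b ^ 2)⁻¹ := by
  refine ((integrable_inv_one_add_sq.comp_div hb).const_mul (b ^ 2)⁻¹).congr
    (.of_forall fun x ↦ ?_)
  field_simp
  ring

section InvSqrtDifference

variable {a b : ℝ}

lemma inv_sqrt_sub_inv_sqrt_nonneg (ha : 0 < a) (hab : a ≤ b) (x : ℝ) :
    0 ≤ 1 / √(x ^ 2 + a ^ 2) - 1 / √(x ^ 2 + b ^ 2) := by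
  have : √(x ^ 2 + a ^ 2) ≤ √(x ^ 2 + b ^ 2) := Real.sqrt_le_sqrt (by nlinarith)
  exact sub_nonneg.2 (one_div_le_one_div_of_le (by positivity) this)

lemma inv_sqrt_sub_inv_sqrt_le (ha : 0 < a) (hab : a ≤ b) (x : ℝ) :
    1 / √(x ^ 2 + a ^ 2) - 1 / √(x ^ 2 + b ^ 2) ≤ (b ^ 2 - a ^ 2) / a * (x ^ 2 + b ^ 2)⁻¹ := by
  set s := √(x ^ 2 + a ^ 2)
  set t := √(x ^ 2 + b ^ 2)
  have hs2 : s ^ 2 = x ^ 2 + a ^ 2 := Real.sq_sqrt (by positivity)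
  have ht2 : t ^ 2 = x ^ 2 + b ^ 2 := Real.sq_sqrt (by positivity)
  have has : a ≤ s := Real.le_sqrt_of_sq_le (by nlinarith)
  have hst : s ≤ t := Real.sqrt_le_sqrt (by nlinarith)
  have hs : 0 < s := ha.trans_le has
  have ht : 0 < t := hs.trans_le hst
  calc 1 / s - 1 / t = (t ^ 2 - s ^ 2) / (s * t * (t + s)) := by field_simp; ring
    _ ≤ (t ^ 2 - s ^ 2) / (a * t ^ 2) :=
      div_le_div_of_nonneg_left (by nlinarith) (by positivity)
        (by nlinarith [mul_le_mul_of_nonneg_right has (sq_nonneg t)])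
    _ = (b ^ 2 - a ^ 2) / a * (x ^ 2 + b ^ 2)⁻¹ := by rw [hs2, ht2]; field_simp; ring

lemma integrable_inv_sqrt_sub_inv_sqrt (ha : 0 < a) (hab : a ≤ b) :
    Integrable fun x : ℝ ↦ 1 / √(x ^ 2 + a ^ 2) - 1 / √(x ^ 2 + b ^ 2) :=
  ((integrable_inv_sq_add_sq (ha.trans_le hab).ne').const_mul _).mono' (by fun_prop)
    (.of_forall fun x ↦ by
      rw [norm_of_nonneg (inv_sqrt_sub_inv_sqrt_nonneg ha hab x)]
      exact inv_sqrt_sub_inv_sqrt_le ha hab x)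

end InvSqrtDifference

lemma hasDerivAt_arsinh_div {c : ℝ} (hc : 0 < c) (x : ℝ) :
    HasDerivAt (fun x ↦ arsinh (x / c)) (1 / √(x ^ 2 + c ^ 2)) x := by
  refine ((hasDerivAt_id x).div_const c).arsinh.congr_deriv ?_
  have : √(1 + (x / c) ^ 2) = √(x ^ 2 + c ^ 2) / c := by
    rw [Real.sqrt_eq_iff_mul_self_eq (by positivity) (by positivity), div_mul_div_comm,
      Real.mul_self_sqrt (by positivity)]
    field_simp
    ring
  rw [id, this, smul_eq_mul]
  field_simp

lemma tendsto_arsinh_div_sub_log_atTop {c : ℝ} (hc : 0 < c) :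
    Tendsto (fun x ↦ arsinh (x / c) - log x) atTop (𝓝 (log (2 / c))) := by
  set h : ℝ → ℝ := fun u ↦ log (c⁻¹ + √(u ^ 2 + c⁻¹ ^ 2))
  have hcont : ContinuousAt h 0 :=
    ((by fun_prop : Continuous fun u : ℝ ↦ c⁻¹ + √(u ^ 2 + c⁻¹ ^ 2)).continuousAt).log
      (by positivity)
  have h0 : h 0 = log (2 / c) := by
    simp only [h, zero_pow two_ne_zero, zero_add, Real.sqrt_sq (inv_pos.2 hc).le]
    ring_nf
  refine (h0 ▸ hcont.tendsto.comp tendsto_inv_atTop_zero).congr' ?_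
  filter_upwards [eventually_gt_atTop 0] with x hx
  have : x / c + √(1 + (x / c) ^ 2) = x * (c⁻¹ + √(x⁻¹ ^ 2 + c⁻¹ ^ 2)) := by
    rw [show 1 + (x / c) ^ 2 = x ^ 2 * (x⁻¹ ^ 2 + c⁻¹ ^ 2) by field_simp,
      Real.sqrt_mul (sq_nonneg x), Real.sqrt_sq hx.le]
    ring
  show log (c⁻¹ + √(x⁻¹ ^ 2 + c⁻¹ ^ 2)) = log (x / c + √(1 + (x / c) ^ 2)) - log x
  rw [this, Real.log_mul hx.ne' (by positivity)]
  ring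

lemma integral_inv_sqrt_sub_inv_sqrt {a b : ℝ} (ha : 0 < a) (hab : a ≤ b) :
    ∫ x : ℝ, (1 / √(x ^ 2 + a ^ 2) - 1 / √(x ^ 2 + b ^ 2)) = 2 * log (b / a) := by
  have hb : 0 < b := ha.trans_le hab
  set G : ℝ → ℝ := fun x ↦ arsinh (x / a) - arsinh (x / b)
  have htop : Tendsto G atTop (𝓝 (log (2 / a) - log (2 / b))) :=
    ((tendsto_arsinh_div_sub_log_atTop ha).sub (tendsto_arsinh_div_sub_log_atTop hb)).congr
      fun x ↦ by ring
  have hbot : Tendsto G atBot (𝓝 (-(log (2 / a) - log (2 / b)))) :=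
    (htop.comp tendsto_neg_atBot_atTop).neg.congr fun x ↦ by
      simp only [Function.comp_apply, G, neg_div, arsinh_neg]; ring
  rw [integral_of_hasDerivAt_of_tendsto
    (fun x ↦ (hasDerivAt_arsinh_div ha x).sub (hasDerivAt_arsinh_div hb x))
    (integrable_inv_sqrt_sub_inv_sqrt ha hab) hbot htop,
    Real.log_div two_ne_zero ha.ne', Real.log_div two_ne_zero hb.ne', Real.log_div hb.ne' ha.ne']
  ring

lemma periodic_log_sin : Function.Periodic (fun u ↦ log (sin u)) π := fun u ↦ by
  simp only [sin_add_pi, log_neg_eq_log]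

lemma intervalIntegrable_log_sin_half (a b : ℝ) :
    IntervalIntegrable (fun y ↦ log (sin (y / 2))) volume a b :=
  MeromorphicOn.intervalIntegrable_log (f := fun y ↦ sin (y / 2)) fun y _ ↦ by fun_prop

lemma integral_log_sin_half : ∫ y in (-π)..π, log (sin (y / 2)) = -2 * π * log 2 := by
  have h := periodic_log_sin.intervalIntegral_add_eq (-(π / 2)) 0
  rw [show -(π / 2) + π = π / 2 by ring, zero_add, integral_log_sin_zero_pi] at h
  rw [intervalIntegral.integral_comp_div (fun u ↦ log (sin u)) two_ne_zero, neg_div, h,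
    smul_eq_mul]
  ring

lemma ae_sin_half_ne_zero (μ : Measure ℝ) [NullSingletonClass μ] : ∀ᵐ y ∂μ, sin (y / 2) ≠ 0 := by
  filter_upwards [(countable_range fun n : ℤ ↦ 2 * (n * π)).ae_notMem μ] with y hy h
  obtain ⟨n, hn⟩ := sin_eq_zero_iff.1 h
  exact hy ⟨n, by dsimp only; linarith⟩

noncomputable def Veff1Kernel (x y : ℝ) : ℝ := 1 / √(x ^ 2 + 4 * sin (y / 2) ^ 2)

lemma Veff1Kernel_sub_Y1_eq (x y : ℝ) :
    Veff1Kernel x y - Y1 x = 1 / √(x ^ 2 + (2 * |sin (y / 2)|) ^ 2) - 1 / √(x ^ 2 + 2 ^ 2) := by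
  rw [Veff1Kernel, Y1, mul_pow, sq_abs]
  norm_num

lemma two_mul_abs_sin_le_two (t : ℝ) : 2 * |sin t| ≤ 2 := by
  linarith [abs_sin_le_one t]

section Slice

variable {y : ℝ}

lemma Veff1Kernel_sub_Y1_nonneg (hy : sin (y / 2) ≠ 0) (x : ℝ) : 0 ≤ Veff1Kernel x y - Y1 x := by
  rw [Veff1Kernel_sub_Y1_eq]
  exact inv_sqrt_sub_inv_sqrt_nonneg (by positivity) (two_mul_abs_sin_le_two _) x

lemma integrable_Veff1Kernel_sub_Y1 (hy : sin (y / 2) ≠ 0) :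
    Integrable fun x ↦ Veff1Kernel x y - Y1 x := by
  simp_rw [Veff1Kernel_sub_Y1_eq]
  exact integrable_inv_sqrt_sub_inv_sqrt (by positivity) (two_mul_abs_sin_le_two _)

lemma integral_Veff1Kernel_sub_Y1 (hy : sin (y / 2) ≠ 0) :
    ∫ x, (Veff1Kernel x y - Y1 x) = -2 * log (sin (y / 2)) := by
  simp_rw [Veff1Kernel_sub_Y1_eq]
  rw [integral_inv_sqrt_sub_inv_sqrt (by positivity) (two_mul_abs_sin_le_two _),
    Real.log_div two_ne_zero (by positivity), Real.log_mul two_ne_zero (abs_ne_zero.2 hy),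
    log_abs]
  ring

end Slice

lemma integrable_Veff1Kernel_sub_Y1_prod :
    Integrable (fun p : ℝ × ℝ ↦ Veff1Kernel p.1 p.2 - Y1 p.1)
      (volume.prod (volume.restrict (Ioc (-π) π))) := by
  have hmeas : Measurable fun p : ℝ × ℝ ↦ Veff1Kernel p.1 p.2 - Y1 p.1 := by
    unfold Veff1Kernel Y1
    fun_prop
  refine (integrable_prod_iff' hmeas.aestronglyMeasurable).2 ⟨?_, ?_⟩
  · filter_upwards [ae_sin_half_ne_zero _] with y hy using integrable_Veff1Kernel_sub_Y1 hy
  · refine ((intervalIntegrable_log_sin_half (-π) π).1.const_mul (-2)).congr ?_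
    filter_upwards [ae_sin_half_ne_zero _] with y hy
    simp_rw [norm_of_nonneg (Veff1Kernel_sub_Y1_nonneg hy _)]
    exact (integral_Veff1Kernel_sub_Y1 hy).symm

-- At `x = 0` both integrands fail to be integrable in `y`, so both sides take junk values.
lemma Veff1_sub_Y1_eq_integral {x : ℝ} (hx : x ≠ 0) :
    Veff1 x - Y1 x = (2 * π)⁻¹ * ∫ y in Ioc (-π) π, (Veff1Kernel x y - Y1 x) := by
  have hcont : Continuous fun y ↦ Veff1Kernel x y := by
    refine continuous_const.div (by fun_prop) fun y ↦ (Real.sqrt_pos.2 ?_).ne'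
    positivity
  have hπ : -π ≤ π := by linarith [pi_pos]
  rw [integral_sub hcont.integrableOn_Ioc (integrableOn_const (by simp)), setIntegral_const,
    Real.volume_real_Ioc_of_le hπ, Veff1, ← integral_of_le hπ]
  simp only [Veff1Kernel, smul_eq_mul]
  field_simp
  ring

/-- `V_eff^1 − Y₁ ∈ L¹(ℝ)` and its integral equals `ln 4`. -/
theorem Veff1_sub_Y1_integral :
    Integrable (fun x : ℝ => Veff1 x - Y1 x) (volume : Measure ℝ) ∧
    ∫ x : ℝ, (Veff1 x - Y1 x) = Real.log 4 := by
  have hK := integrable_Veff1Kernel_sub_Y1_prod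
  have hae : (fun x ↦ Veff1 x - Y1 x) =ᵐ[volume]
      fun x ↦ (2 * π)⁻¹ * ∫ y in Ioc (-π) π, (Veff1Kernel x y - Y1 x) := by
    filter_upwards [volume.ae_ne 0] with x hx using Veff1_sub_Y1_eq_integral hx
  refine ⟨(hK.integral_prod_left.const_mul _).congr hae.symm, ?_⟩
  have hinner : (fun y ↦ ∫ x, (Veff1Kernel x y - Y1 x)) =ᵐ[volume.restrict (Ioc (-π) π)]
      fun y ↦ -2 * log (sin (y / 2)) := by
    filter_upwards [ae_sin_half_ne_zero _] with y hy using integral_Veff1Kernel_sub_Y1 hy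
  rw [integral_congr_ae hae, MeasureTheory.integral_const_mul, integral_integral_swap hK,
    integral_congr_ae hinner, MeasureTheory.integral_const_mul,
    ← integral_of_le (by linarith [pi_pos]), integral_log_sin_half,
    show (4 : ℝ) = 2 ^ 2 by norm_num, Real.log_pow]
  field_simp
  push_cast
  ring
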